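/- For finite-dimensional complex Hilbert spaces X and Y and operators A, B : Y → X, the trace norm of the partial transpose (transpose on the first factor) of vec(A)·vec(B)* equals ‖A‖₁·‖B‖₁, where vec is the linear map sending the matrix unit E_ij to e_i ⊗ e_j. -/

import Mathlib

/-!
The partial transpose of `vec(A) vec(B)*` is, entry by entry, the Kronecker product `B̄ ⊗ Aᵀ`
with its two column factors swapped. The trace norm is multiplicative on Kronecker products,
because the square root of a Kronecker product of positive semidefinite matrices is the Kronecker
product of the square roots, and it is invariant under reindexing, entrywise conjugation and
transposition. Only the last needs an idea: `tr √(A*A) = tr √(AA*)`, since on the finitely many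
points of both spectra `√` agrees with a polynomial `p` with `p(0) = 0`, and
`tr (AB)^k = tr (BA)^k` for `k ≥ 1`.
-/

open Matrix Kronecker BigOperators ComplexOrder

noncomputable section

/-- Square root of a positive semidefinite matrix (the definition `Matrix.PosSemidef.sqrt`
of the older Mathlib, removed since). -/
noncomputable def psdSqrtOld {n : Type*} [Fintype n] [DecidableEq n] {A : Matrix n n ℂ}
    (hA : A.PosSemidef) : Matrix n n ℂ :=
  hA.1.eigenvectorUnitary.1 * diagonal (((↑) ∘ Real.sqrt ∘ hA.1.eigenvalues : n → ℂ)) *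
    (star hA.1.eigenvectorUnitary : Matrix n n ℂ)

/-- Trace norm (sum of singular values) of a complex matrix. -/
noncomputable def traceNorm {l m : Type*} [Fintype l] [Fintype m] [DecidableEq m]
    (A : Matrix l m ℂ) : ℝ :=
  ((psdSqrtOld (Matrix.posSemidef_conjTranspose_mul_self A)).trace).re

/-- Frobenius norm. -/
noncomputable def frobNorm {l m : Type*} [Fintype l] [Fintype m]
    (A : Matrix l m ℂ) : ℝ :=
  Real.sqrt ((Aᴴ * A).trace.re)

/-- Partial transpose on the first tensor factor. -/
def ptranspose {a b : Type*} (X : Matrix (a × b) (a × b) ℂ) : Matrix (a × b) (a × b) ℂ :=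
  Matrix.of fun p q => X (q.1, p.2) (p.1, q.2)

/-- Outer product `u v*`. -/
def outer {a : Type*} (u v : a → ℂ) : Matrix a a ℂ :=
  Matrix.of fun p q => u p * star (v q)

/-- Density operator: positive semidefinite with trace one. -/
def IsDensity {a : Type*} [Fintype a] (ρ : Matrix a a ℂ) : Prop :=
  ρ.PosSemidef ∧ ρ.trace = 1

/-- Maximally entangled unit vector in `ℂⁿ ⊗ ℂᵐ`. -/
def MaxEntangled (n m : ℕ) (u : Fin n × Fin m → ℂ) : Prop :=
  ∃ (x : Fin (min n m) → EuclideanSpace ℂ (Fin n))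
    (y : Fin (min n m) → EuclideanSpace ℂ (Fin m)),
    Orthonormal ℂ x ∧ Orthonormal ℂ y ∧
      ∀ p : Fin n × Fin m,
        u p = (1 / Real.sqrt (min n m) : ℝ) * ∑ i, x i p.1 * y i p.2

/-- Extension `Φ ⊗ I` of a matrix map to a system with ancilla `c`. -/
def tensorExt {a b c : Type*} [Fintype a] [DecidableEq a] [Fintype c]
    (Φ : Matrix a a ℂ →ₗ[ℂ] Matrix b b ℂ)
    (X : Matrix (a × c) (a × c) ℂ) : Matrix (b × c) (b × c) ℂ :=
  Matrix.of fun p q => Φ (Matrix.of fun i j => X (i, p.2) (j, q.2)) p.1 q.1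

/-- Quantum channel: completely positive and trace preserving. -/
def IsChannel {a b : Type*} [Fintype a] [DecidableEq a] [Fintype b]
    (Φ : Matrix a a ℂ →ₗ[ℂ] Matrix b b ℂ) : Prop :=
  (∀ X, (Φ X).trace = X.trace) ∧
    ∀ (k : ℕ) (X : Matrix (a × Fin k) (a × Fin k) ℂ),
      X.PosSemidef → (tensorExt Φ X).PosSemidef

/-- Partial trace over the second tensor factor. -/
def ptraceRight {a b : Type*} [Fintype b] (M : Matrix (a × b) (a × b) ℂ) :
    Matrix a a ℂ :=
  Matrix.of fun i k => ∑ c, M (i, c) (k, c)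

/-- Partial trace over the first tensor factor. -/
def ptraceLeft {a b : Type*} [Fintype a] (M : Matrix (a × b) (a × b) ℂ) :
    Matrix b b ℂ :=
  Matrix.of fun i k => ∑ c, M (c, i) (c, k)

/-- Canonical maximally entangled state `τ = (1/d) vec(I)vec(I)*` on `a ⊗ a`. -/
noncomputable def tauGen {a : Type*} [Fintype a] [DecidableEq a] :
    Matrix (a × a) (a × a) ℂ :=
  Matrix.of fun p q =>
    (Fintype.card a : ℂ)⁻¹ * (if p.1 = p.2 then 1 else 0) * (if q.1 = q.2 then 1 else 0)

/-- The operator `τ ⊗ σ` on `a ⊗ (a ⊗ r)`. -/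
noncomputable def tauSigma {a r : Type*} [Fintype a] [DecidableEq a]
    (σ : Matrix r r ℂ) : Matrix (a × (a × r)) (a × (a × r)) ℂ :=
  Matrix.of fun p q => tauGen (p.1, p.2.1) (q.1, q.2.1) * σ p.2.2 q.2.2

/-- Fidelity of two positive semidefinite matrices. -/
noncomputable def fidelity {a : Type*} [Fintype a] [DecidableEq a]
    {P Q : Matrix a a ℂ} (hP : P.PosSemidef) (hQ : Q.PosSemidef) : ℝ :=
  traceNorm (psdSqrtOld hP * psdSqrtOld hQ)

open scoped MatrixOrder

section TraceMulComm

open Polynomial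

variable {l m : Type*} [Fintype l] [Fintype m] [DecidableEq l] [DecidableEq m]

lemma mul_mul_pow_mul {α : Type*} [Semiring α] (A : Matrix l m α) (B : Matrix m l α) (k : ℕ) :
    A * (B * A) ^ k * B = (A * B) ^ (k + 1) := by
  induction k with
  | zero => simp
  | succ k ih => rw [pow_succ, pow_succ, ← ih]; simp only [Matrix.mul_assoc]

lemma trace_pow_mul_comm {α : Type*} [CommSemiring α] (A : Matrix l m α) (B : Matrix m l α)
    {k : ℕ} (hk : k ≠ 0) : ((A * B) ^ k).trace = ((B * A) ^ k).trace := by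
  obtain ⟨k, rfl⟩ := Nat.exists_eq_succ_of_ne_zero hk
  rw [← mul_mul_pow_mul, Matrix.mul_assoc, trace_mul_comm, Matrix.mul_assoc, ← pow_succ]

lemma trace_aeval_mul_comm {R α : Type*} [CommSemiring R] [CommSemiring α] [Algebra R α]
    (A : Matrix l m α) (B : Matrix m l α) {p : R[X]} (hp : p.coeff 0 = 0) :
    (aeval (A * B) p).trace = (aeval (B * A) p).trace := by
  simp only [aeval_eq_sum_range, trace_sum, trace_smul]
  refine Finset.sum_congr rfl fun k _ => ?_
  rcases eq_or_ne k 0 with rfl | hk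
  · simp [hp]
  · rw [trace_pow_mul_comm A B hk]

theorem trace_cfc_mul_comm {𝕜 : Type*} [RCLike 𝕜] (A : Matrix l m 𝕜) (B : Matrix m l 𝕜)
    (hAB : IsSelfAdjoint (A * B)) (hBA : IsSelfAdjoint (B * A)) {f : ℝ → ℝ} (hf : f 0 = 0) :
    (cfc f (A * B)).trace = (cfc f (B * A)).trace := by
  classical
  set s : Finset ℝ :=
    insert 0 ((spectrum ℝ (A * B)).toFinite.toFinset ∪ (spectrum ℝ (B * A)).toFinite.toFinset)
  set p := Lagrange.interpolate s id f
  have hp : ∀ x ∈ s, p.eval x = f x := fun x hx =>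
    Lagrange.eval_interpolate_at_node f Function.injective_id.injOn hx
  have hp0 : p.coeff 0 = 0 := by
    rw [coeff_zero_eq_eval_zero, hp 0 (Finset.mem_insert_self _ _), hf]
  rw [cfc_congr fun x hx => (hp x (by simp [s, hx])).symm, cfc_polynomial p (A * B),
    cfc_congr fun x hx => (hp x (by simp [s, hx])).symm, cfc_polynomial p (B * A),
    trace_aeval_mul_comm A B hp0]

end TraceMulComm

section Sqrt

variable {𝕜 m m' : Type*} [RCLike 𝕜] [Fintype m] [Fintype m'] [DecidableEq m]

lemma sqrt_eq_cfc_real_sqrt {P : Matrix m m 𝕜} (hP : P.PosSemidef) :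
    CFC.sqrt P = cfc Real.sqrt P := by
  rw [CFC.sqrt_eq_real_sqrt P hP.nonneg, cfcₙ_eq_cfc]

lemma sqrt_kronecker {l : Type*} [Fintype l] [DecidableEq l] {P : Matrix l l 𝕜}
    {Q : Matrix m m 𝕜} (hP : P.PosSemidef) (hQ : Q.PosSemidef) :
    CFC.sqrt (P ⊗ₖ Q) = CFC.sqrt P ⊗ₖ CFC.sqrt Q :=
  CFC.sqrt_unique (by rw [← mul_kronecker_mul, CFC.sqrt_mul_sqrt_self P hP.nonneg,
      CFC.sqrt_mul_sqrt_self Q hQ.nonneg])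
    ((CFC.sqrt_nonneg P).posSemidef.kronecker (CFC.sqrt_nonneg Q).posSemidef).nonneg

lemma sqrt_transpose {P : Matrix m m 𝕜} (hP : P.PosSemidef) :
    CFC.sqrt Pᵀ = (CFC.sqrt P)ᵀ :=
  CFC.sqrt_unique (by rw [← transpose_mul, CFC.sqrt_mul_sqrt_self P hP.nonneg])
    (CFC.sqrt_nonneg P).posSemidef.transpose.nonneg

lemma sqrt_submatrix_equiv [DecidableEq m'] {P : Matrix m m 𝕜} (hP : P.PosSemidef)
    (e : m' ≃ m) : CFC.sqrt (P.submatrix e e) = (CFC.sqrt P).submatrix e e :=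
  CFC.sqrt_unique (by rw [submatrix_mul_equiv, CFC.sqrt_mul_sqrt_self P hP.nonneg])
    ((CFC.sqrt_nonneg P).posSemidef.submatrix e).nonneg

end Sqrt

section TraceNorm

variable {l m l' m' : Type*} [Fintype l] [Fintype m] [Fintype l'] [Fintype m'] [DecidableEq m]

lemma psdSqrtOld_eq_sqrt {P : Matrix m m ℂ} (hP : P.PosSemidef) :
    psdSqrtOld hP = CFC.sqrt P := by
  rw [sqrt_eq_cfc_real_sqrt hP, hP.1.cfc_eq, IsHermitian.cfc, Unitary.conjStarAlgAut_apply]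
  rfl

lemma ofReal_traceNorm (A : Matrix l m ℂ) :
    (traceNorm A : ℂ) = (CFC.sqrt (Aᴴ * A)).trace := by
  have h : 0 ≤ (CFC.sqrt (Aᴴ * A)).trace := (CFC.sqrt_nonneg _).posSemidef.trace_nonneg
  rw [traceNorm, psdSqrtOld_eq_sqrt]
  exact Complex.ext rfl (Complex.nonneg_iff.mp h).2

theorem traceNorm_kronecker {p q : Type*} [Fintype p] [Fintype q] [DecidableEq q]
    (A : Matrix l m ℂ) (B : Matrix p q ℂ) :
    traceNorm (A ⊗ₖ B) = traceNorm A * traceNorm B := by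
  refine Complex.ofReal_injective ?_
  rw [Complex.ofReal_mul, ofReal_traceNorm, ofReal_traceNorm, ofReal_traceNorm,
    conjTranspose_kronecker, ← mul_kronecker_mul,
    sqrt_kronecker (posSemidef_conjTranspose_mul_self A) (posSemidef_conjTranspose_mul_self B),
    trace_kronecker]

theorem traceNorm_submatrix_equiv [DecidableEq m'] (A : Matrix l m ℂ) (e₁ : l' ≃ l)
    (e₂ : m' ≃ m) : traceNorm (A.submatrix e₁ e₂) = traceNorm A := by
  refine Complex.ofReal_injective ?_
  rw [ofReal_traceNorm, ofReal_traceNorm, conjTranspose_submatrix, submatrix_mul_equiv,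
    sqrt_submatrix_equiv (posSemidef_conjTranspose_mul_self A)]
  exact e₂.sum_comp fun i => CFC.sqrt (Aᴴ * A) i i

theorem traceNorm_map_star (A : Matrix l m ℂ) : traceNorm (A.map star) = traceNorm A := by
  have h : (A.map star)ᴴ * A.map star = (Aᴴ * A)ᵀ := by
    ext
    simp [mul_apply, mul_comm]
  refine Complex.ofReal_injective ?_
  rw [ofReal_traceNorm, ofReal_traceNorm, h,
    sqrt_transpose (posSemidef_conjTranspose_mul_self A), trace_transpose]

theorem traceNorm_conjTranspose [DecidableEq l] (A : Matrix l m ℂ) :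
    traceNorm Aᴴ = traceNorm A := by
  have hAAh := posSemidef_self_mul_conjTranspose A
  have hAhA := posSemidef_conjTranspose_mul_self A
  refine Complex.ofReal_injective ?_
  rw [ofReal_traceNorm, ofReal_traceNorm, conjTranspose_conjTranspose,
    sqrt_eq_cfc_real_sqrt hAAh, sqrt_eq_cfc_real_sqrt hAhA]
  exact trace_cfc_mul_comm A Aᴴ hAAh.1 hAhA.1 Real.sqrt_zero

theorem traceNorm_transpose [DecidableEq l] (A : Matrix l m ℂ) :
    traceNorm Aᵀ = traceNorm A := by
  have h : Aᵀ = Aᴴ.map star := by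
    ext
    simp
  rw [h, traceNorm_map_star, traceNorm_conjTranspose]

end TraceNorm

lemma ptranspose_outer {a b : Type*} (A B : Matrix a b ℂ) :
    ptranspose (outer (fun p : a × b => A p.1 p.2) (fun p : a × b => B p.1 p.2)) =
      (B.map star ⊗ₖ Aᵀ).submatrix (Equiv.refl _) (Equiv.prodComm a b) := by
  ext ⟨i, j⟩ ⟨k, o⟩
  simp [ptranspose, outer, mul_comm]

/-- Proposition 1 (Vidal–Werner): the trace norm of the partial transpose of
`vec(A) vec(B)*` equals `‖A‖₁ ‖B‖₁`. -/
theorem stmt0 (n m : ℕ) (A B : Matrix (Fin n) (Fin m) ℂ) :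
    traceNorm (ptranspose (outer (fun p : Fin n × Fin m => A p.1 p.2)
      (fun p : Fin n × Fin m => B p.1 p.2))) = traceNorm A * traceNorm B := by
  rw [ptranspose_outer, traceNorm_submatrix_equiv, traceNorm_kronecker, traceNorm_map_star,
    traceNorm_transpose, mul_comm]
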